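/- arXiv:2310.14927 — 7 statements merged into one kernel-verified Lean document; each statement's English description precedes it below -/
import Mathlib

section
/- Let b : ℕ → ℝ and m : ℕ → ℝ define a birth-death chain (b r > 0, m r > 0 for all r), let α > 0 and let u : ℕ → ℝ be α-harmonic. If u 0 > 0, then u is strictly increasing, i.e. u r < u (r+1) for all r ∈ ℕ. -/
/-!
The flux `b r · (u (r+1) − u r)` across the edge `{r, r+1}` starts at `α m₀ u₀` and grows by
`α m_{r+1} u_{r+1}` at each further vertex. So as long as `u` stays positive the flux is
positive, hence `u` increases and stays positive: an induction on `r` carries both facts.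
-/

/-- A birth-death chain over `ℕ` with edge weights `b` (edge between `r` and `r+1`)
and measure `m`: a function `u` is `α`-harmonic if `(Δ + α) u = 0` where
`Δu(0) = (1/m 0) · b 0 · (u 0 − u 1)` and
`Δu(r) = (1/m r) · (b (r−1) · (u r − u (r−1)) + b r · (u r − u (r+1)))` for `r ≥ 1`. -/
def IsAlphaHarmonicBD (b m : ℕ → ℝ) (α : ℝ) (u : ℕ → ℝ) : Prop :=
  (1 / m 0) * (b 0 * (u 0 - u 1)) + α * u 0 = 0 ∧
  ∀ r : ℕ, 1 ≤ r →
    (1 / m r) * (b (r - 1) * (u r - u (r - 1)) + b r * (u r - u (r + 1))) + α * u r = 0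

def bdFlux (b u : ℕ → ℝ) (r : ℕ) : ℝ :=
  b r * (u (r + 1) - u r)

theorem lt_succ_of_bdFlux_pos {b u : ℕ → ℝ} {r : ℕ} (hb : 0 < b r) (h : 0 < bdFlux b u r) :
    u r < u (r + 1) :=
  sub_pos.mp (pos_of_mul_pos_right h hb.le)

namespace IsAlphaHarmonicBD

variable {b m : ℕ → ℝ} {α : ℝ} {u : ℕ → ℝ}

theorem bdFlux_zero (hu : IsAlphaHarmonicBD b m α u) (hm : m 0 ≠ 0) :
    bdFlux b u 0 = α * m 0 * u 0 := by
  have h := hu.1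
  unfold bdFlux
  field_simp at h
  linarith

theorem bdFlux_succ (hu : IsAlphaHarmonicBD b m α u) (r : ℕ) (hm : m (r + 1) ≠ 0) :
    bdFlux b u (r + 1) = bdFlux b u r + α * m (r + 1) * u (r + 1) := by
  have h := hu.2 (r + 1) (Nat.le_add_left 1 r)
  rw [Nat.add_sub_cancel] at h
  unfold bdFlux
  field_simp at h
  linarith

theorem pos_and_bdFlux_pos (hu : IsAlphaHarmonicBD b m α u) (hb : ∀ r, 0 < b r)
    (hm : ∀ r, 0 < m r) (hα : 0 < α) (h0 : 0 < u 0) (r : ℕ) :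
    0 < u r ∧ 0 < bdFlux b u r := by
  induction r with
  | zero =>
    rw [hu.bdFlux_zero (hm 0).ne']
    exact ⟨h0, mul_pos (mul_pos hα (hm 0)) h0⟩
  | succ r ih =>
    obtain ⟨hu_pos, hflux_pos⟩ := ih
    have hu_pos' : 0 < u (r + 1) := hu_pos.trans (lt_succ_of_bdFlux_pos (hb r) hflux_pos)
    rw [hu.bdFlux_succ r (hm (r + 1)).ne']
    exact ⟨hu_pos', add_pos hflux_pos (mul_pos (mul_pos hα (hm (r + 1))) hu_pos')⟩

end IsAlphaHarmonicBD

theorem bd_harmonic_strict_mono (b m : ℕ → ℝ) (hb : ∀ r, 0 < b r) (hm : ∀ r, 0 < m r)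
    (α : ℝ) (hα : 0 < α) (u : ℕ → ℝ) (hu : IsAlphaHarmonicBD b m α u)
    (h0 : 0 < u 0) : ∀ r : ℕ, u r < u (r + 1) := fun r =>
  lt_succ_of_bdFlux_pos (hb r) (hu.pos_and_bdFlux_pos hb hm hα h0 r).2
end

section
/- Let b : ℕ → ℝ and m : ℕ → ℝ define a birth-death chain (b r > 0, m r > 0 for all r), let α > 0 and let u : ℕ → ℝ be α-harmonic with u 0 > 0. Then for every r ≥ 1 one has b r·(u (r+1) − u r) ≥ b (r−1)·(u r − u (r−1)), and for every r ∈ ℕ one has b r·(u (r+1) − u r) ≥ α·u 0·m 0. -/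
/-!
Writing `F r = b r * (u (r + 1) - u r)` for the flux through the edge `(r, r + 1)`, the
`α`-harmonic equations say `F 0 = α m₀ u₀` and `F (r + 1) = F r + α m_{r+1} u_{r+1}`.
By induction the flux stays at least `F 0 > 0`, so `u` increases and remains positive,
which in turn makes the flux nondecreasing.
-/

namespace IsAlphaHarmonicBD

variable {b m : ℕ → ℝ} {α : ℝ} {u : ℕ → ℝ}

theorem flux_zero (hu : IsAlphaHarmonicBD b m α u) (hm : m 0 ≠ 0) :
    b 0 * (u 1 - u 0) = α * u 0 * m 0 := by
  have h := hu.1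
  field_simp at h
  linarith

theorem flux_succ (hu : IsAlphaHarmonicBD b m α u) (r : ℕ) (hm : m (r + 1) ≠ 0) :
    b (r + 1) * (u (r + 2) - u (r + 1)) =
      b r * (u (r + 1) - u r) + α * m (r + 1) * u (r + 1) := by
  have h := hu.2 (r + 1) (Nat.le_add_left 1 r)
  simp only [Nat.add_sub_cancel] at h
  field_simp at h
  linarith

theorem flux_le_flux_succ (hu : IsAlphaHarmonicBD b m α u) (hα : 0 ≤ α) (r : ℕ)
    (hm : 0 < m (r + 1)) (hur : 0 ≤ u (r + 1)) :
    b r * (u (r + 1) - u r) ≤ b (r + 1) * (u (r + 2) - u (r + 1)) := by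
  rw [hu.flux_succ r hm.ne']
  have : 0 ≤ α * m (r + 1) * u (r + 1) := by positivity
  linarith

theorem pos_and_flux_ge (hu : IsAlphaHarmonicBD b m α u) (hb : ∀ r, 0 < b r)
    (hm : ∀ r, 0 < m r) (hα : 0 < α) (h0 : 0 < u 0) (r : ℕ) :
    0 < u r ∧ α * u 0 * m 0 ≤ b r * (u (r + 1) - u r) := by
  induction r with
  | zero => exact ⟨h0, (hu.flux_zero (hm 0).ne').ge⟩
  | succ k ih =>
    obtain ⟨huk, hflux⟩ := ih
    have hflux_pos : 0 < b k * (u (k + 1) - u k) :=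
      lt_of_lt_of_le (by have := hm 0; positivity) hflux
    have hincr : u k < u (k + 1) := sub_pos.mp (pos_of_mul_pos_right hflux_pos (hb k).le)
    have hpos : 0 < u (k + 1) := huk.trans hincr
    exact ⟨hpos, hflux.trans (hu.flux_le_flux_succ hα.le k (hm (k + 1)) hpos.le)⟩

end IsAlphaHarmonicBD

theorem bd_harmonic_increments (b m : ℕ → ℝ) (hb : ∀ r, 0 < b r) (hm : ∀ r, 0 < m r)
    (α : ℝ) (hα : 0 < α) (u : ℕ → ℝ) (hu : IsAlphaHarmonicBD b m α u)
    (h0 : 0 < u 0) :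
    (∀ r : ℕ, 1 ≤ r →
      b (r - 1) * (u r - u (r - 1)) ≤ b r * (u (r + 1) - u r)) ∧
    (∀ r : ℕ, α * u 0 * m 0 ≤ b r * (u (r + 1) - u r)) := by
  have key := hu.pos_and_flux_ge hb hm hα h0
  refine ⟨fun r hr => ?_, fun r => (key r).2⟩
  obtain ⟨k, rfl⟩ := Nat.exists_eq_add_of_le' hr
  simpa only [Nat.add_sub_cancel] using
    hu.flux_le_flux_succ hα.le k (hm (k + 1)) (key (k + 1)).1.le
end

section
/- Let b : ℕ → ℝ and m : ℕ → ℝ define a birth-death chain (b r > 0, m r > 0 for all r), let α > 0 and let u : ℕ → ℝ be α-harmonic with u 0 > 0. Then u r ≥ u 0 for all r, and u r ≥ α·u 0·m 0·(∑_{k=0}^{r−1} 1/(b k)) for all r ≥ 1. -/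
namespace IsAlphaHarmonicBD

variable {b m : ℕ → ℝ} {α : ℝ} {u : ℕ → ℝ}

theorem bdFlux_eq_sum (hm : ∀ r, m r ≠ 0) (hu : IsAlphaHarmonicBD b m α u) (r : ℕ) :
    bdFlux b u r = α * ∑ k ∈ Finset.range (r + 1), m k * u k := by
  induction r with
  | zero =>
    have h := hu.1
    field_simp [hm 0] at h
    simp only [bdFlux, zero_add, Finset.sum_range_one]
    linarith
  | succ r ih =>
    have h := hu.2 (r + 1) (Nat.le_add_left 1 r)
    field_simp [hm (r + 1)] at h
    rw [Nat.add_sub_cancel] at h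
    rw [Finset.sum_range_succ, mul_add, ← ih]
    simp only [bdFlux] at ih ⊢
    linarith

theorem bdFlux_nonneg (hm : ∀ r, 0 < m r) (hα : 0 ≤ α) (hu : IsAlphaHarmonicBD b m α u)
    {r : ℕ} (hnonneg : ∀ k ≤ r, 0 ≤ u k) : 0 ≤ bdFlux b u r := by
  rw [hu.bdFlux_eq_sum fun k => (hm k).ne']
  refine mul_nonneg hα (Finset.sum_nonneg fun k hk => mul_nonneg (hm k).le (hnonneg k ?_))
  exact Nat.le_of_lt_succ (Finset.mem_range.1 hk)

theorem le_succ (hb : ∀ r, 0 < b r) (hm : ∀ r, 0 < m r) (hα : 0 ≤ α)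
    (hu : IsAlphaHarmonicBD b m α u) {r : ℕ} (hnonneg : ∀ k ≤ r, 0 ≤ u k) :
    u r ≤ u (r + 1) := by
  have hflux := hu.bdFlux_nonneg hm hα hnonneg
  rw [bdFlux, mul_nonneg_iff_of_pos_left (hb r)] at hflux
  linarith

theorem monotone (hb : ∀ r, 0 < b r) (hm : ∀ r, 0 < m r) (hα : 0 ≤ α)
    (hu : IsAlphaHarmonicBD b m α u) (h0 : 0 ≤ u 0) : Monotone u := by
  have hinit : ∀ r, ∀ k ≤ r, u 0 ≤ u k := by
    intro r
    induction r with
    | zero => intro k hk; rw [Nat.le_zero.1 hk]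
    | succ r ih =>
      intro k hk
      rcases Nat.le_succ_iff.1 hk with hk | rfl
      · exact ih k hk
      · exact (ih r le_rfl).trans <|
          hu.le_succ hb hm hα fun j hj => h0.trans (ih j hj)
  exact monotone_nat_of_le_succ fun r =>
    hu.le_succ hb hm hα fun k hk => h0.trans (hinit r k hk)

theorem le_bdFlux (hm : ∀ r, 0 < m r) (hα : 0 ≤ α) (hu : IsAlphaHarmonicBD b m α u)
    (hmono : Monotone u) (h0 : 0 ≤ u 0) (r : ℕ) : α * m 0 * u 0 ≤ bdFlux b u r := by
  rw [hu.bdFlux_eq_sum fun k => (hm k).ne', mul_assoc]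
  refine mul_le_mul_of_nonneg_left ?_ hα
  exact Finset.single_le_sum (f := fun k => m k * u k)
    (fun k _ => mul_nonneg (hm k).le (h0.trans (hmono (Nat.zero_le k))))
    (Finset.mem_range.2 r.succ_pos)

end IsAlphaHarmonicBD

theorem eq_add_sum_bdFlux_div (b u : ℕ → ℝ) (hb : ∀ r, b r ≠ 0) (r : ℕ) :
    u r = u 0 + ∑ k ∈ Finset.range r, bdFlux b u k / b k := by
  simp only [bdFlux, mul_div_cancel_left₀ _ (hb _), Finset.sum_range_sub]
  ring

theorem bd_harmonic_lower_bound (b m : ℕ → ℝ) (hb : ∀ r, 0 < b r) (hm : ∀ r, 0 < m r)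
    (α : ℝ) (hα : 0 < α) (u : ℕ → ℝ) (hu : IsAlphaHarmonicBD b m α u)
    (h0 : 0 < u 0) :
    (∀ r : ℕ, u 0 ≤ u r) ∧
    (∀ r : ℕ, 1 ≤ r →
      α * u 0 * m 0 * ∑ k ∈ Finset.range r, 1 / b k ≤ u r) := by
  have hmono := hu.monotone hb hm hα.le h0.le
  refine ⟨fun r => hmono (Nat.zero_le r), fun r _ => ?_⟩
  calc α * u 0 * m 0 * ∑ k ∈ Finset.range r, 1 / b k
      = ∑ k ∈ Finset.range r, α * m 0 * u 0 / b k := by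
        rw [Finset.mul_sum]
        exact Finset.sum_congr rfl fun k _ => by ring
    _ ≤ ∑ k ∈ Finset.range r, bdFlux b u k / b k :=
        Finset.sum_le_sum fun k _ =>
          div_le_div_of_nonneg_right (hu.le_bdFlux hm hα.le hmono h0.le k) (hb k).le
    _ ≤ u 0 + ∑ k ∈ Finset.range r, bdFlux b u k / b k := le_add_of_nonneg_left h0.le
    _ = u r := (eq_add_sum_bdFlux_div b u (fun k => (hb k).ne') r).symm
end

section
/- Let b : ℕ → ℝ and m : ℕ → ℝ define a birth-death chain (b r > 0, m r > 0 for all r), let α > 0 and let u : ℕ → ℝ be α-harmonic with u 0 > 0. If the family (u r · m r)_{r∈ℕ} is summable, then: (1) m is summable; (2) the family r ↦ (∑_{k>r} m k)/(b r) is summable; and (3) ∑_{r=0}^∞ u r · m r ≥ α·u 0·m 0 · ∑_{r=0}^∞ (∑_{k>r} m k)/(b r). -/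
/-!
The flux `b n (u (n+1) - u n)` of an `α`-harmonic function through the edge `(n, n+1)` equals
`α ∑_{r ≤ n} u r m r`, so `u` increases and every flux is at least `α u 0 m 0`. Summation by parts
rewrites `∑ (u r - u 0) m r ≤ ∑ u r m r` as `∑ (u (r+1) - u r) m(B_r^c)`, and bounding each
increment `u (r+1) - u r` below by `α u 0 m 0 / b r` gives the inequality.
-/

open Finset

theorem summable_and_mul_tsum_le_of_mul_le {ι : Type*} {f g : ι → ℝ} {c : ℝ} (hc : 0 < c)
    (hf : ∀ i, 0 ≤ f i) (hfg : ∀ i, c * f i ≤ g i) (hg : Summable g) :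
    Summable f ∧ c * ∑' i, f i ≤ ∑' i, g i := by
  have hf_sum : Summable f :=
    (hg.mul_left c⁻¹).of_nonneg_of_le hf fun i => (le_inv_mul_iff₀ hc).mpr (hfg i)
  exact ⟨hf_sum, tsum_mul_left (a := c) ▸ (hf_sum.mul_left c).tsum_le_tsum hfg hg⟩

theorem hasSum_ite_lt_tail {m : ℕ → ℝ} (hm : Summable m) (j : ℕ) :
    HasSum (fun r => if j < r then m r else 0) (∑' k, m (j + 1 + k)) := by
  have hinj : Function.Injective (fun k => j + 1 + k) := fun k l h => by simpa using h
  refine (hinj.hasSum_iff fun r hr => if_neg fun hjr => hr ⟨r - (j + 1), by dsimp only; omega⟩).mp ?_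
  simpa [Function.comp_def, show ∀ k, j < j + 1 + k by omega] using
    (hm.comp_injective hinj).hasSum

theorem Monotone.hasSum_sub_mul_tail {v m : ℕ → ℝ} (hv : Monotone v) (hm : ∀ r, 0 ≤ m r)
    (hm_sum : Summable m) (h : Summable fun r => (v r - v 0) * m r) :
    HasSum (fun j => (v (j + 1) - v j) * ∑' k, m (j + 1 + k)) (∑' r, (v r - v 0) * m r) := by
  set G : ℕ × ℕ → ℝ := fun p => if p.1 < p.2 then (v (p.1 + 1) - v p.1) * m p.2 else 0
  have hG_nonneg : ∀ p, 0 ≤ G p := fun p => by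
    dsimp only [G]; split_ifs
    exacts [mul_nonneg (sub_nonneg.mpr (hv p.1.le_succ)) (hm _), le_rfl]
  have hG_row : ∀ r, HasSum (fun j => G (j, r)) ((v r - v 0) * m r) := fun r => by
    have hrow_sum : ∑ j ∈ range r, G (j, r) = (v r - v 0) * m r := by
      rw [← sum_range_sub v, sum_mul]
      exact sum_congr rfl fun j hj => if_pos (mem_range.mp hj)
    exact hrow_sum ▸ hasSum_sum_of_ne_finset_zero fun j hj => if_neg (by simpa using hj)
  have hG_swap : Summable fun p : ℕ × ℕ => G p.swap :=
    (summable_prod_of_nonneg fun p => hG_nonneg p.swap).mpr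
      ⟨fun r => (hG_row r).summable, by simpa only [Prod.swap_prod_mk, (hG_row _).tsum_eq] using h⟩
  have hG : HasSum G (∑' r, (v r - v 0) * m r) :=
    (Equiv.prodComm ℕ ℕ).hasSum_iff.mp <|
      (hG_swap.hasSum.prod_fiberwise fun r => hG_row r).tsum_eq ▸ hG_swap.hasSum
  refine hG.prod_fiberwise fun j => ?_
  simpa only [G, mul_ite, mul_zero] using (hasSum_ite_lt_tail hm_sum j).mul_left (v (j + 1) - v j)

namespace IsAlphaHarmonicBD

variable {b m : ℕ → ℝ} {α : ℝ} {u : ℕ → ℝ}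

theorem flux_eq (hu : IsAlphaHarmonicBD b m α u) (hm : ∀ r, m r ≠ 0) (n : ℕ) :
    b n * (u (n + 1) - u n) = α * ∑ r ∈ range (n + 1), u r * m r := by
  induction n with
  | zero =>
    have h := hu.1
    field_simp [hm 0] at h
    simp only [zero_add, sum_range_one]
    linarith
  | succ n ih =>
    have h := hu.2 (n + 1) n.succ_pos
    simp only [Nat.add_sub_cancel] at h
    field_simp [hm (n + 1)] at h
    rw [sum_range_succ]
    linarith

theorem strictMono (hu : IsAlphaHarmonicBD b m α u) (hb : ∀ r, 0 < b r) (hm : ∀ r, 0 < m r)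
    (hα : 0 < α) (h0 : 0 < u 0) : StrictMono u := by
  have hflux := hu.flux_eq fun r => (hm r).ne'
  have increment_pos : ∀ n, 0 < ∑ r ∈ range (n + 1), u r * m r → u n < u (n + 1) := fun n hS =>
    sub_pos.mp <| pos_of_mul_pos_right ((hflux n).symm ▸ mul_pos hα hS) (hb n).le
  have key : ∀ n, 0 < u n ∧ 0 < ∑ r ∈ range (n + 1), u r * m r := by
    intro n
    induction n with
    | zero => simpa using ⟨h0, mul_pos h0 (hm 0)⟩
    | succ n ih =>
      have hu_succ := ih.1.trans (increment_pos n ih.2)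
      exact ⟨hu_succ, by rw [sum_range_succ]; exact add_pos ih.2 (mul_pos hu_succ (hm _))⟩
  exact strictMono_nat_of_lt_succ fun n => increment_pos n (key n).2

theorem le_flux (hu : IsAlphaHarmonicBD b m α u) (hb : ∀ r, 0 < b r) (hm : ∀ r, 0 < m r)
    (hα : 0 < α) (h0 : 0 < u 0) (n : ℕ) : α * u 0 * m 0 ≤ b n * (u (n + 1) - u n) := by
  have hmono := (hu.strictMono hb hm hα h0).monotone
  rw [hu.flux_eq (fun r => (hm r).ne') n, mul_assoc]
  refine mul_le_mul_of_nonneg_left ?_ hα.le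
  exact single_le_sum (f := fun r => u r * m r)
    (fun r _ => mul_nonneg (h0.trans_le (hmono r.zero_le)).le (hm r).le) (by simp)

theorem mul_div_le_sub_mul (hu : IsAlphaHarmonicBD b m α u) (hb : ∀ r, 0 < b r)
    (hm : ∀ r, 0 < m r) (hα : 0 < α) (h0 : 0 < u 0) (n : ℕ) {T : ℝ} (hT : 0 ≤ T) :
    α * u 0 * m 0 * (T / b n) ≤ (u (n + 1) - u n) * T :=
  calc α * u 0 * m 0 * (T / b n) ≤ b n * (u (n + 1) - u n) * (T / b n) :=
        mul_le_mul_of_nonneg_right (hu.le_flux hb hm hα h0 n) (div_nonneg hT (hb n).le)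
    _ = (u (n + 1) - u n) * T := by field_simp [(hb n).ne']

end IsAlphaHarmonicBD

theorem bd_harmonic_ell1_tail_sums (b m : ℕ → ℝ) (hb : ∀ r, 0 < b r) (hm : ∀ r, 0 < m r)
    (α : ℝ) (hα : 0 < α) (u : ℕ → ℝ) (hu : IsAlphaHarmonicBD b m α u)
    (h0 : 0 < u 0) (hsum : Summable (fun r : ℕ => u r * m r)) :
    Summable m ∧
    Summable (fun r : ℕ => (∑' k : ℕ, m (r + 1 + k)) / b r) ∧
    α * u 0 * m 0 * ∑' r : ℕ, (∑' k : ℕ, m (r + 1 + k)) / b r ≤ ∑' r : ℕ, u r * m r := by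
  have hmono : Monotone u := (hu.strictMono hb hm hα h0).monotone
  have hm_sum : Summable m := (hsum.div_const (u 0)).of_nonneg_of_le (fun r => (hm r).le)
    fun r => (le_div_iff₀ h0).mpr <| by
      rw [mul_comm]; exact mul_le_mul_of_nonneg_right (hmono r.zero_le) (hm r).le
  have hsub_le : ∀ r, (u r - u 0) * m r ≤ u r * m r := fun r =>
    mul_le_mul_of_nonneg_right (sub_le_self _ h0.le) (hm r).le
  have hsub : Summable fun r => (u r - u 0) * m r := hsum.of_nonneg_of_le
    (fun r => mul_nonneg (sub_nonneg.mpr (hmono r.zero_le)) (hm r).le) hsub_le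
  have habel := hmono.hasSum_sub_mul_tail (fun r => (hm r).le) hm_sum hsub
  have hc : 0 < α * u 0 * m 0 := by have := hm 0; positivity
  obtain ⟨htail, hle⟩ := summable_and_mul_tsum_le_of_mul_le hc
    (fun r => div_nonneg (tsum_nonneg fun k => (hm _).le) (hb r).le)
    (fun r => hu.mul_div_le_sub_mul hb hm hα h0 r (tsum_nonneg fun k => (hm _).le))
    habel.summable
  exact ⟨hm_sum, htail, hle.trans (habel.tsum_eq ▸ hsub.tsum_le_tsum hsub_le hsum)⟩
end

section
/- Let b : ℕ → ℝ and m : ℕ → ℝ define a birth-death chain (b r > 0, m r > 0 for all r). Then the following are equivalent: (i) for every α > 0, every α-harmonic function u : ℕ → ℝ with (|u r|·m r)_{r∈ℕ} summable is identically zero; (ii) either m is not summable, or both the family r ↦ 1/(b r) and the family r ↦ (∑_{k>r} m k)/(b r) fail to be summable. -/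
/-!
Harmonicity is equivalent to the flux balance `b r (u (r+1) - u r) = α ∑_{k ≤ r} u k m k`, so a
solution is determined by `u 0`; normalised to `u 0 > 0` it is positive and increasing. Summation
by parts against the tails `S r = m(B_r^c)` compares `∑ r, (u (r+1) - u r) S r` with `∑ k, u k m k`.
For a nonzero ℓ¹ solution every increment is at least `α u 0 m 0 / b r`, which forces `m` and
`S / b` to be summable. Conversely, if `∑ S / b = C < ∞` and `α C ≤ 1/2`, the same comparison gives
`∑_{k ≤ N} u k m k ≤ 2 u 0 ∑ m`, so the solution with `u 0 = 1` lies in ℓ¹. When `m` is summable,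
`S ≤ ∑ m` makes summability of `1 / b` imply that of `S / b`.
-/

namespace BirthDeath

open Finset

variable {b m : ℕ → ℝ} {α : ℝ} {u v : ℕ → ℝ}

/-- Summing `m · (Δ + α) u` over `{0, …, r}` telescopes to this identity. -/
def FluxBalance (b m : ℕ → ℝ) (α : ℝ) (u : ℕ → ℝ) : Prop :=
  ∀ r, b r * (u (r + 1) - u r) = α * ∑ k ∈ range (r + 1), u k * m k

theorem isAlphaHarmonicBD_iff_fluxBalance (hm : ∀ r, m r ≠ 0) :
    IsAlphaHarmonicBD b m α u ↔ FluxBalance b m α u := by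
  have cleared : ∀ r x, 1 / m r * x + α * u r = 0 ↔ x + α * u r * m r = 0 := fun r x => by
    rw [← mul_right_inj' (hm r), mul_zero, mul_add, ← mul_assoc, mul_one_div_cancel (hm r)]
    ring_nf
  simp only [IsAlphaHarmonicBD, cleared]
  constructor
  · rintro ⟨h0, hsucc⟩ r
    induction r with
    | zero => simp only [zero_add, sum_range_one]; linear_combination -h0
    | succ n ih =>
      have h := hsucc (n + 1) (by omega)
      simp only [Nat.add_sub_cancel] at h
      rw [sum_range_succ]
      linear_combination ih - h
  · intro h
    refine ⟨?_, fun r hr => ?_⟩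
    · have h0 := h 0
      simp only [zero_add, sum_range_one] at h0
      linear_combination -h0
    · obtain ⟨n, rfl⟩ := Nat.exists_eq_add_of_le' hr
      have h1 := h (n + 1)
      rw [sum_range_succ] at h1
      simp only [Nat.add_sub_cancel]
      linear_combination h n - h1

namespace FluxBalance

theorem neg (h : FluxBalance b m α u) : FluxBalance b m α (-u) := fun r => by
  simp only [Pi.neg_apply, neg_mul, sum_neg_distrib]
  linear_combination -h r

theorem sub_eq (h : FluxBalance b m α u) (hb : b r ≠ 0) :
    u (r + 1) - u r = α * (∑ k ∈ range (r + 1), u k * m k) / b r :=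
  eq_div_of_mul_eq hb (by rw [mul_comm, h r])

theorem eq_zero (h : FluxBalance b m α u) (hb : ∀ r, b r ≠ 0) (hu0 : u 0 = 0) : u = 0 := by
  funext r
  induction r using Nat.strong_induction_on with
  | _ r ih =>
    rcases r with _ | n
    · exact hu0
    · have hmass : ∑ k ∈ range (n + 1), u k * m k = 0 :=
        sum_eq_zero fun k hk => by simp [ih k (by simp at hk; omega)]
      have hstep := h.sub_eq (hb n)
      rw [hmass, mul_zero, zero_div, sub_eq_zero] at hstep
      exact hstep.trans (ih n (by omega))

theorem le_succ (h : FluxBalance b m α u) (hb : 0 < b r) (hα : 0 ≤ α)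
    (hmass : 0 ≤ ∑ k ∈ range (r + 1), u k * m k) : u r ≤ u (r + 1) :=
  sub_nonneg.1 <| (h.sub_eq hb.ne').symm ▸ by positivity

variable (hb : ∀ r, 0 < b r) (hm : ∀ r, 0 ≤ m r) (hα : 0 ≤ α)
include hb hm hα

theorem pos (h : FluxBalance b m α u) (hu0 : 0 < u 0) (r : ℕ) : 0 < u r := by
  induction r using Nat.strong_induction_on with
  | _ r ih =>
    rcases r with _ | n
    · exact hu0
    · have hmass : 0 ≤ ∑ k ∈ range (n + 1), u k * m k :=
        sum_nonneg fun k hk => mul_nonneg (ih k (by simp at hk; omega)).le (hm k)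
      exact (ih n (by omega)).trans_le (h.le_succ (hb n) hα hmass)

theorem monotone (h : FluxBalance b m α u) (hu0 : 0 < u 0) : Monotone u :=
  monotone_nat_of_le_succ fun n => h.le_succ (hb n) hα <|
    sum_nonneg fun k _ => mul_nonneg (h.pos hb hm hα hu0 k).le (hm k)

end FluxBalance

/-- The mass `m(B_r^c)` of the complement of the ball `B_r = {0, …, r}`. -/
noncomputable def tailSum (m : ℕ → ℝ) (r : ℕ) : ℝ := ∑' k, m (r + 1 + k)

theorem tailSum_nonneg (hm : ∀ r, 0 ≤ m r) (r : ℕ) : 0 ≤ tailSum m r :=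
  tsum_nonneg fun _ => hm _

theorem tailSum_le_tsum (hm : ∀ r, 0 ≤ m r) (hs : Summable m) (r : ℕ) :
    tailSum m r ≤ ∑' k, m k :=
  tsum_comp_le_tsum_of_inj hs hm (add_right_injective (r + 1))

theorem tailSum_eq_add (hs : Summable m) (r : ℕ) :
    tailSum m r = m (r + 1) + tailSum m (r + 1) := by
  have hshift : Summable fun k => m (r + 1 + k) := hs.comp_injective (add_right_injective _)
  rw [tailSum, hshift.tsum_eq_zero_add, tailSum, add_zero]
  exact congrArg _ (tsum_congr fun k => congrArg m (by ring))

theorem tsum_eq_add_tailSum_zero (hs : Summable m) : ∑' k, m k = m 0 + tailSum m 0 := by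
  rw [hs.tsum_eq_zero_add, tailSum]
  simp only [zero_add, add_comm 1]

theorem sum_range_sub_mul_tailSum (hs : Summable m) (v : ℕ → ℝ) (N : ℕ) :
    ∑ r ∈ range N, (v (r + 1) - v r) * tailSum m r
      = v N * tailSum m N - v 0 * tailSum m 0 + ∑ r ∈ range N, v (r + 1) * m (r + 1) := by
  rw [← sum_range_sub fun r => v r * tailSum m r, ← sum_add_distrib]
  refine sum_congr rfl fun r _ => ?_
  rw [tailSum_eq_add hs r]
  ring

theorem sum_range_succ_mul_le (hm : ∀ r, 0 ≤ m r) (hs : Summable m) (hvN : 0 ≤ v N) :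
    ∑ k ∈ range (N + 1), v k * m k
      ≤ v 0 * ∑' k, m k + ∑ r ∈ range N, (v (r + 1) - v r) * tailSum m r := by
  rw [sum_range_sub_mul_tailSum hs, sum_range_succ', tsum_eq_add_tailSum_zero hs]
  nlinarith [tailSum_nonneg hm N]

theorem mul_tailSum_le_tsum (hm : ∀ r, 0 ≤ m r) (hs : Summable m) (hv : Monotone v)
    (hv0 : 0 ≤ v 0) (hvm : Summable fun k => v k * m k) (N : ℕ) :
    v N * tailSum m N ≤ ∑' k, v k * m k := by
  calc v N * tailSum m N = ∑' k, v N * m (N + 1 + k) := tsum_mul_left.symm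
    _ ≤ ∑' k, v (N + 1 + k) * m (N + 1 + k) := by
        refine Summable.tsum_le_tsum (fun k => ?_)
          ((hs.comp_injective (add_right_injective (N + 1))).mul_left _)
          (hvm.comp_injective (add_right_injective (N + 1)))
        exact mul_le_mul_of_nonneg_right (hv (by omega)) (hm _)
    _ ≤ ∑' k, v k * m k :=
        tsum_comp_le_tsum_of_inj hvm (fun k => mul_nonneg (hv0.trans (hv k.zero_le)) (hm k))
          (add_right_injective (N + 1))

theorem sum_range_sub_mul_tailSum_le (hm : ∀ r, 0 ≤ m r) (hs : Summable m) (hv : Monotone v)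
    (hv0 : 0 ≤ v 0) (hvm : Summable fun k => v k * m k) (N : ℕ) :
    ∑ r ∈ range N, (v (r + 1) - v r) * tailSum m r ≤ 2 * ∑' k, v k * m k := by
  have hvm0 : ∀ k, 0 ≤ v k * m k := fun k => mul_nonneg (hv0.trans (hv k.zero_le)) (hm k)
  have hpartial : ∑ k ∈ range (N + 1), v k * m k ≤ ∑' k, v k * m k :=
    hvm.sum_le_tsum _ fun k _ => hvm0 k
  rw [sum_range_succ'] at hpartial
  rw [sum_range_sub_mul_tailSum hs]
  nlinarith [mul_tailSum_le_tsum hm hs hv hv0 hvm N, tailSum_nonneg hm 0, hvm0 0]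

/-- The solution of the flux balance with value `1` at the root, paired with its partial masses
`∑ k ∈ range (r + 1), u k * m k`. -/
noncomputable def fluxSolutionAux (b m : ℕ → ℝ) (α : ℝ) : ℕ → ℝ × ℝ
  | 0 => (1, m 0)
  | r + 1 =>
    let p := fluxSolutionAux b m α r
    let x := p.1 + α * p.2 / b r
    (x, p.2 + x * m (r + 1))

noncomputable def fluxSolution (b m : ℕ → ℝ) (α : ℝ) (r : ℕ) : ℝ := (fluxSolutionAux b m α r).1

theorem fluxSolutionAux_snd (r : ℕ) :
    (fluxSolutionAux b m α r).2 = ∑ k ∈ range (r + 1), fluxSolution b m α k * m k := by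
  induction r with
  | zero => simp [fluxSolutionAux, fluxSolution]
  | succ n ih => rw [sum_range_succ, ← ih]; rfl

theorem fluxSolution_zero : fluxSolution b m α 0 = 1 := rfl

theorem fluxBalance_fluxSolution (hb : ∀ r, b r ≠ 0) : FluxBalance b m α (fluxSolution b m α) :=
  fun r => by
    rw [← fluxSolutionAux_snd, mul_comm, ← eq_div_iff (hb r)]
    simp only [fluxSolution, fluxSolutionAux]
    ring

theorem FluxBalance.sum_range_mul_le (h : FluxBalance b m α v) (hb : ∀ r, 0 < b r)
    (hm : ∀ r, 0 ≤ m r) (hs : Summable m) (hα : 0 ≤ α)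
    (htail : Summable fun r => tailSum m r / b r) (hC : α * ∑' r, tailSum m r / b r ≤ 1 / 2)
    (hv0 : 0 < v 0) (N : ℕ) :
    ∑ k ∈ range (N + 1), v k * m k ≤ 2 * v 0 * ∑' k, m k := by
  set mass := fun n => ∑ k ∈ range (n + 1), v k * m k
  have hvpos := h.pos hb hm hα hv0
  have hmass_mono : Monotone mass := fun i j hij =>
    sum_le_sum_of_subset_of_nonneg (range_subset_range.2 (by omega))
      fun k _ _ => mul_nonneg (hvpos k).le (hm k)
  have hmass_nonneg : 0 ≤ mass N := sum_nonneg fun k _ => mul_nonneg (hvpos k).le (hm k)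
  have hpartial : ∑ r ∈ range N, tailSum m r / b r ≤ ∑' r, tailSum m r / b r :=
    htail.sum_le_tsum _ fun r _ => div_nonneg (tailSum_nonneg hm r) (hb r).le
  have key : mass N ≤ v 0 * ∑' k, m k + α * mass N * ∑' r, tailSum m r / b r := calc
    mass N ≤ v 0 * ∑' k, m k + ∑ r ∈ range N, (v (r + 1) - v r) * tailSum m r :=
        sum_range_succ_mul_le hm hs (hvpos N).le
    _ = v 0 * ∑' k, m k + ∑ r ∈ range N, α * mass r * (tailSum m r / b r) := by
        congr 1
        refine sum_congr rfl fun r _ => ?_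
        rw [h.sub_eq (hb r).ne']
        ring
    _ ≤ v 0 * ∑' k, m k + ∑ r ∈ range N, α * mass N * (tailSum m r / b r) := by
        gcongr with r hr
        · exact div_nonneg (tailSum_nonneg hm r) (hb r).le
        · exact hmass_mono (by simp at hr; omega)
    _ ≤ v 0 * ∑' k, m k + α * mass N * ∑' r, tailSum m r / b r := by
        rw [← mul_sum]
        gcongr
  nlinarith

theorem exists_isAlphaHarmonicBD_ne_zero (hb : ∀ r, 0 < b r) (hm : ∀ r, 0 < m r)
    (hs : Summable m) (htail : Summable fun r => tailSum m r / b r) :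
    ∃ α > 0, ∃ u, IsAlphaHarmonicBD b m α u ∧ Summable (fun r => |u r| * m r) ∧ u ≠ 0 := by
  set C := ∑' r, tailSum m r / b r
  have hC : 0 ≤ C :=
    tsum_nonneg fun r => div_nonneg (tailSum_nonneg (fun r => (hm r).le) r) (hb r).le
  set α := 1 / (2 * (C + 1))
  have hα : 0 < α := by positivity
  have hαC : α * C ≤ 1 / 2 := by
    rw [div_mul_eq_mul_div, one_mul, div_le_div_iff₀ (by positivity) two_pos]
    linarith
  have h := fluxBalance_fluxSolution (α := α) (m := m) fun r => (hb r).ne'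
  have hpos := h.pos hb (fun r => (hm r).le) hα.le one_pos
  refine ⟨α, hα, fluxSolution b m α, (isAlphaHarmonicBD_iff_fluxBalance fun r => (hm r).ne').2 h,
    ?_, fun h0 => by simpa [fluxSolution_zero] using congrFun h0 0⟩
  refine summable_of_sum_range_le (c := 2 * ∑' k, m k)
    (fun r => mul_nonneg (abs_nonneg _) (hm r).le) fun N => ?_
  calc ∑ r ∈ range N, |fluxSolution b m α r| * m r
      = ∑ r ∈ range N, fluxSolution b m α r * m r :=
        sum_congr rfl fun r _ => by rw [abs_of_pos (hpos r)]
    _ ≤ ∑ r ∈ range (N + 1), fluxSolution b m α r * m r :=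
        sum_le_sum_of_subset_of_nonneg (range_subset_range.2 N.le_succ)
          fun r _ _ => mul_nonneg (hpos r).le (hm r).le
    _ ≤ 2 * fluxSolution b m α 0 * ∑' k, m k :=
        h.sum_range_mul_le hb (fun r => (hm r).le) hs hα.le htail hαC one_pos N
    _ = 2 * ∑' k, m k := by rw [fluxSolution_zero, mul_one]

theorem FluxBalance.summable_tailSum_div (h : FluxBalance b m α v) (hb : ∀ r, 0 < b r)
    (hm : ∀ r, 0 < m r) (hα : 0 < α) (hv0 : 0 < v 0) (hvm : Summable fun r => |v r| * m r) :
    Summable m ∧ Summable fun r => tailSum m r / b r := by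
  have hvpos := h.pos hb (fun r => (hm r).le) hα.le hv0
  have hmono := h.monotone hb (fun r => (hm r).le) hα.le hv0
  replace hvm : Summable fun r => v r * m r := hvm.congr fun r => by rw [abs_of_pos (hvpos r)]
  have hs : Summable m := by
    refine Summable.of_nonneg_of_le (fun r => (hm r).le) (fun r => ?_) (hvm.div_const (v 0))
    rw [le_div_iff₀ hv0, mul_comm]
    exact mul_le_mul_of_nonneg_right (hmono r.zero_le) (hm r).le
  -- every increment of `v` is at least `α v₀ m₀ / b r`, the flux out of the root
  set c := α * (v 0 * m 0)
  have hc : 0 < c := by have := hm 0; positivity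
  refine ⟨hs, summable_of_sum_range_le (c := 2 * (∑' k, v k * m k) / c)
    (fun r => div_nonneg (tailSum_nonneg (fun r => (hm r).le) r) (hb r).le) fun N => ?_⟩
  calc ∑ r ∈ range N, tailSum m r / b r
      ≤ ∑ r ∈ range N, (v (r + 1) - v r) * tailSum m r / c := by
        refine sum_le_sum fun r _ => ?_
        have hmass : v 0 * m 0 ≤ ∑ k ∈ range (r + 1), v k * m k :=
          single_le_sum (f := fun k => v k * m k) (fun k _ => mul_nonneg (hvpos k).le (hm k).le)
            (mem_range.2 r.succ_pos)
        have htail_nonneg := tailSum_nonneg (fun r => (hm r).le) r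
        calc tailSum m r / b r = c / b r * tailSum m r / c := by field_simp
          _ ≤ α * (∑ k ∈ range (r + 1), v k * m k) / b r * tailSum m r / c := by
              gcongr
              · exact (hb r).le
              · exact mul_le_mul_of_nonneg_left hmass hα.le
          _ = (v (r + 1) - v r) * tailSum m r / c := by rw [h.sub_eq (hb r).ne']
    _ = (∑ r ∈ range N, (v (r + 1) - v r) * tailSum m r) / c := by rw [sum_div]
    _ ≤ 2 * (∑' k, v k * m k) / c := by
        gcongr
        exact sum_range_sub_mul_tailSum_le (fun r => (hm r).le) hs hmono hv0.le hvm N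

theorem summable_tailSum_div_of_isAlphaHarmonicBD (hb : ∀ r, 0 < b r) (hm : ∀ r, 0 < m r)
    (hα : 0 < α) (hu : IsAlphaHarmonicBD b m α u) (hum : Summable fun r => |u r| * m r)
    (hne : u ≠ 0) : Summable m ∧ Summable fun r => tailSum m r / b r := by
  have h := (isAlphaHarmonicBD_iff_fluxBalance fun r => (hm r).ne').1 hu
  have hu0 : u 0 ≠ 0 := fun hu0 => hne (h.eq_zero (fun r => (hb r).ne') hu0)
  rcases hu0.lt_or_gt with hneg | hpos
  · exact h.neg.summable_tailSum_div hb hm hα (neg_pos.2 hneg) (by simpa using hum)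
  · exact h.summable_tailSum_div hb hm hα hpos hum

theorem summable_tailSum_div_of_summable_inv (hb : ∀ r, 0 < b r) (hm : ∀ r, 0 ≤ m r)
    (hs : Summable m) (hinv : Summable fun r => 1 / b r) :
    Summable fun r => tailSum m r / b r :=
  (hinv.mul_left (∑' k, m k)).of_nonneg_of_le
    (fun r => div_nonneg (tailSum_nonneg hm r) (hb r).le) fun r => by
      rw [mul_one_div]
      exact div_le_div_of_nonneg_right (tailSum_le_tsum hm hs r) (hb r).le

end BirthDeath

theorem bd_triviality_ell1_harmonic_iff (b m : ℕ → ℝ)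
    (hb : ∀ r, 0 < b r) (hm : ∀ r, 0 < m r) :
    (∀ α : ℝ, 0 < α → ∀ u : ℕ → ℝ, IsAlphaHarmonicBD b m α u →
      Summable (fun r : ℕ => |u r| * m r) → u = 0) ↔
    (¬ Summable m ∨
      (¬ Summable (fun r : ℕ => 1 / b r) ∧
       ¬ Summable (fun r : ℕ => (∑' k : ℕ, m (r + 1 + k)) / b r))) := by
  constructor
  · intro htrivial
    by_contra! hcon
    obtain ⟨hs, hinv⟩ := hcon
    have htail : Summable fun r => BirthDeath.tailSum m r / b r :=
      (em _).elim (BirthDeath.summable_tailSum_div_of_summable_inv hb (fun r => (hm r).le) hs) hinv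
    obtain ⟨α, hα, u, hu, hum, hne⟩ := BirthDeath.exists_isAlphaHarmonicBD_ne_zero hb hm hs htail
    exact hne (htrivial α hα u hu hum)
  · rintro hcond α hα u hu hum
    by_contra hne
    obtain ⟨hs, htail⟩ :=
      BirthDeath.summable_tailSum_div_of_isAlphaHarmonicBD hb hm hα hu hum hne
    exact hcond.elim (· hs) fun h => h.2 htail
end

section
/- Let n be a finite type and A : Matrix n n ℝ a matrix whose off-diagonal entries are nonpositive (A i j ≤ 0 for i ≠ j). Then for every t ≥ 0 all entries of the matrix exponential exp(−t·A) are nonnegative. -/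
/-!
Since the off-diagonal entries of `-t • A` are nonnegative, adding `c • 1` for `c` large makes it
entrywise nonnegative, and the exponential of an entrywise nonnegative matrix is nonnegative term by
term of its power series. The scalar part commutes with everything and contributes only the positive
factor `exp (-c)`.
-/

open NormedSpace

namespace Matrix

variable {n : Type*} [Fintype n] [DecidableEq n]

open scoped Norms.Operator in
theorem exp_apply_nonneg_of_nonneg {M : Matrix n n ℝ} (hM : ∀ i j, 0 ≤ M i j) (i j : n) :
    0 ≤ exp M i j := by
  have hsum := Pi.hasSum.1 (Pi.hasSum.1 (exp_series_hasSum_exp' (𝕂 := ℝ) M) i) j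
  exact hsum.nonneg fun k => mul_nonneg (by positivity) (pow_apply_nonneg hM k i j)

theorem exp_apply_nonneg_of_offDiag_nonneg {M : Matrix n n ℝ}
    (hM : ∀ i j, i ≠ j → 0 ≤ M i j) (i j : n) : 0 ≤ exp M i j := by
  obtain ⟨c, hc⟩ := Finite.exists_le fun k => -M k k
  set B := M + algebraMap ℝ _ c
  have hB : ∀ i j, 0 ≤ B i j := by
    intro i j
    rcases eq_or_ne i j with rfl | hij
    · simpa [B, algebraMap_matrix_apply] using neg_le_iff_add_nonneg'.1 (hc i)
    · simpa [B, algebraMap_matrix_apply, hij] using hM i j hij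
  have hMB : M = B + algebraMap ℝ _ (-c) := by simp [B]
  rw [hMB, exp_add_of_commute _ _ (Algebra.commute_algebraMap_right _ _), algebraMap_eq_diagonal,
    exp_diagonal, mul_diagonal, Pi.coe_exp, Pi.algebraMap_apply, ← Real.exp_eq_exp_ℝ]
  exact mul_nonneg (exp_apply_nonneg_of_nonneg hB i j) (Real.exp_nonneg _)

end Matrix

/-- If the off-diagonal entries of `A` are nonpositive, then all entries of
`exp (−t • A)` are nonnegative for `t ≥ 0`: the heat semigroup of a finite
weighted graph Laplacian is positivity preserving. -/
theorem matrix_exp_nonneg_of_offdiag_nonpos {n : Type*} [Fintype n] [DecidableEq n]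
    (A : Matrix n n ℝ) (hA : ∀ i j, i ≠ j → A i j ≤ 0) :
    ∀ t : ℝ, 0 ≤ t → ∀ i j, 0 ≤ NormedSpace.exp (-t • A) i j := by
  intro t ht
  refine Matrix.exp_apply_nonneg_of_offDiag_nonneg fun i j hij => ?_
  simpa using mul_nonneg_of_nonpos_of_nonpos (neg_nonpos.2 ht) (hA i j hij)
end

section
/- Let n be a finite type, A : Matrix n n ℝ a matrix whose off-diagonal entries are nonpositive (A i j ≤ 0 for i ≠ j), and D : Matrix n n ℝ a diagonal matrix with nonnegative diagonal entries. Then for every t ≥ 0 and every vector φ : n → ℝ with φ ≥ 0 entrywise, one has exp(−t·(A + D)) *ᵥ φ ≤ exp(−t·A) *ᵥ φ entrywise. -/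
/-!
For `c` large, `M + c • 1` is entrywise nonnegative whenever `M` has nonnegative off-diagonal
entries, and `exp M = exp (-c) • exp (M + c • 1)`. The exponential series of an entrywise
nonnegative matrix has entrywise nonnegative terms, monotone in the matrix, so `M ≤ N` entrywise
gives `exp M ≤ exp N` entrywise. Apply this to `M = -t • (A + D) ≤ N = -t • A`.
-/

open scoped Matrix
open NormedSpace

namespace Matrix

variable {n : Type*} [Fintype n] [DecidableEq n]

theorem pow_apply_le_pow_apply {B C : Matrix n n ℝ} (hB : ∀ i j, 0 ≤ B i j)
    (hBC : ∀ i j, B i j ≤ C i j) (k : ℕ) (i j : n) : (B ^ k) i j ≤ (C ^ k) i j := by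
  induction k generalizing j with
  | zero => rfl
  | succ k ih =>
    rw [pow_succ, pow_succ, mul_apply, mul_apply]
    exact Finset.sum_le_sum fun l _ =>
      mul_le_mul (ih l) (hBC l j) (hB l j) ((pow_apply_nonneg hB k i l).trans (ih l))

theorem hasSum_exp_apply (M : Matrix n n ℝ) (i j : n) :
    HasSum (fun k : ℕ => (k.factorial : ℝ)⁻¹ * (M ^ k) i j) (exp M i j) := by
  open scoped Norms.Operator in
  exact Pi.hasSum.mp (Pi.hasSum.mp (exp_series_hasSum_exp' (𝕂 := ℝ) M) i) j

theorem exp_apply_le_exp_apply_of_nonneg {B C : Matrix n n ℝ} (hB : ∀ i j, 0 ≤ B i j)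
    (hBC : ∀ i j, B i j ≤ C i j) (i j : n) : exp B i j ≤ exp C i j :=
  hasSum_le (fun k => mul_le_mul_of_nonneg_left (pow_apply_le_pow_apply hB hBC k i j)
    (by positivity)) (hasSum_exp_apply B i j) (hasSum_exp_apply C i j)

theorem exp_add_smul_one (M : Matrix n n ℝ) (c : ℝ) :
    exp (M + c • 1) = Real.exp c • exp M := by
  rw [exp_add_of_commute _ _ ((Commute.one_right M).smul_right c), smul_one_eq_diagonal,
    exp_diagonal, Pi.exp_def, ← Real.exp_eq_exp_ℝ, ← smul_one_eq_diagonal, mul_smul_one]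

theorem exp_apply_le_exp_apply {M N : Matrix n n ℝ} (hM : ∀ i j, i ≠ j → 0 ≤ M i j)
    (hMN : ∀ i j, M i j ≤ N i j) (i j : n) : exp M i j ≤ exp N i j := by
  set c := ∑ k, |M k k|
  have hMc : ∀ k l, 0 ≤ (M + c • 1) k l := by
    intro k l
    rcases eq_or_ne k l with rfl | hkl
    · have : |M k k| ≤ c :=
        Finset.single_le_sum (f := fun k => |M k k|) (fun _ _ => abs_nonneg _) (Finset.mem_univ k)
      simp only [add_apply, smul_apply, one_apply_eq, smul_eq_mul, mul_one]
      linarith [neg_abs_le (M k k)]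
    · simpa [one_apply_ne hkl] using hM k l hkl
  have hshift (P : Matrix n n ℝ) : exp P = Real.exp (-c) • exp (P + c • 1) := by
    rw [exp_add_smul_one, smul_smul, ← Real.exp_add, neg_add_cancel, Real.exp_zero, one_smul]
  rw [hshift M, hshift N, smul_apply, smul_apply, smul_eq_mul, smul_eq_mul]
  refine mul_le_mul_of_nonneg_left (exp_apply_le_exp_apply_of_nonneg hMc (fun k l => ?_) i j)
    (Real.exp_nonneg _)
  simpa using hMN k l

end Matrix

/-- Domination of semigroups: adding a nonnegative diagonal potential `D` to a
generator `A` with nonpositive off-diagonal entries decreases the semigroup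
applied to nonnegative vectors (Dirichlet vs. Neumann restriction). -/
theorem matrix_exp_domination {n : Type*} [Fintype n] [DecidableEq n]
    (A D : Matrix n n ℝ) (hA : ∀ i j, i ≠ j → A i j ≤ 0)
    (hDoff : ∀ i j, i ≠ j → D i j = 0) (hDdiag : ∀ i, 0 ≤ D i i) :
    ∀ t : ℝ, 0 ≤ t → ∀ φ : n → ℝ, (∀ i, 0 ≤ φ i) → ∀ x,
      (NormedSpace.exp (-t • (A + D)) *ᵥ φ) x ≤ (NormedSpace.exp (-t • A) *ᵥ φ) x := by
  intro t ht φ hφ x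
  have hD : ∀ i j, 0 ≤ D i j := fun i j => by
    rcases eq_or_ne i j with rfl | hij
    · exact hDdiag i
    · exact (hDoff i j hij).ge
  have hoff : ∀ i j, i ≠ j → 0 ≤ (-t • (A + D)) i j := fun i j hij => by
    simpa [hDoff i j hij] using mul_nonneg_of_nonpos_of_nonpos (neg_nonpos.mpr ht) (hA i j hij)
  have hle : ∀ i j, (-t • (A + D)) i j ≤ (-t • A) i j := fun i j => by
    simpa [mul_add] using mul_nonneg ht (hD i j)
  exact Finset.sum_le_sum fun j _ =>
    mul_le_mul_of_nonneg_right (Matrix.exp_apply_le_exp_apply hoff hle x j) (hφ j)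
end
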